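/- arXiv:1502.00238 — 6 statements merged into one kernel-verified Lean document; each statement's English description precedes it below -/
import Mathlib

section
/- Under effectual equivalence of primitive Boolean-register instructions, exactly 4 of the 16 equivalence classes have 6 elements and the remaining 12 classes have 2 elements. -/
/-- Unary Boolean functions. -/
abbrev BFun := Bool → Bool

/-- Constant-false. -/ def Fb : BFun := fun _ => false
/-- Constant-true. -/  def Tb : BFun := fun _ => true
/-- Identity. -/       def Ib : BFun := fun b => b
/-- Complement. -/     def Cb : BFun := fun b => !b

/-- A Boolean-register method: a reply function and a content-update function. -/
abbrev Method := BFun × BFun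

/-- Primitive instructions for a Boolean register. -/
inductive PrimInstr
  | plain (m : Method)
  | ptest (m : Method)
  | ntest (m : Method)

/-- The method carried by a primitive instruction. -/
def PrimInstr.method : PrimInstr → Method
  | .plain m => m
  | .ptest m => m
  | .ntest m => m

/-- Semantics of a primitive instruction: on register content `b`, return the
new content and whether execution proceeds with the next instruction. -/
def sem : PrimInstr → Bool → Bool × Bool
  | .plain m, b => (m.2 b, true)
  | .ptest m, b => (m.2 b, m.1 b)
  | .ntest m, b => (m.2 b, !(m.1 b))


deriving instance DecidableEq for PrimInstr

def primEquiv : PrimInstr ≃ (Method ⊕ Method ⊕ Method) where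
  toFun
    | .plain m => .inl m
    | .ptest m => .inr (.inl m)
    | .ntest m => .inr (.inr m)
  invFun
    | .inl m => .plain m
    | .inr (.inl m) => .ptest m
    | .inr (.inr m) => .ntest m
  left_inv := by rintro (m|m|m) <;> rfl
  right_inv := by rintro (m|m|m) <;> rfl

instance : Fintype PrimInstr := Fintype.ofEquiv _ primEquiv.symm

/-- Exactly 4 effectual-equivalence classes have 6 elements and the remaining
12 classes have 2 elements. -/
theorem class_sizes :
    {s : Bool → Bool × Bool |
        s ∈ Set.range sem ∧ {u : PrimInstr | sem u = s}.ncard = 6}.ncard = 4 ∧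
    {s : Bool → Bool × Bool |
        s ∈ Set.range sem ∧ {u : PrimInstr | sem u = s}.ncard = 2}.ncard = 12 := by
  have key : ∀ s : Bool → Bool × Bool,
      {u : PrimInstr | sem u = s}.ncard = (Finset.univ.filter (fun u => sem u = s)).card := by
    intro s
    rw [Set.ncard_eq_toFinset_card']
    simp [Set.toFinset_setOf]
  have conv : ∀ n : ℕ, {s : Bool → Bool × Bool |
        s ∈ Set.range sem ∧ {u : PrimInstr | sem u = s}.ncard = n} =
      ↑(Finset.univ.filter (fun s => (∃ u, sem u = s) ∧
        (Finset.univ.filter (fun u => sem u = s)).card = n)) := by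
    intro n
    ext s
    simp [key, Set.mem_range]
  rw [conv 6, conv 2, Set.ncard_coe_finset, Set.ncard_coe_finset]
  constructor <;> decide
end

section
/- The set of methods M₀ = {(F,F), (T,T), (I,I), (C,C), (I,F), (I,T), (T,I), (T,C)} is complete for effectual equivalence: every primitive instruction on any of the 16 methods is effectually equivalent to some primitive instruction whose method belongs to M₀. -/
/-- A method set `M` is complete for effectual equivalence: every primitive
instruction has the same semantics as one whose method lies in `M`. -/
def MComplete (M : Set Method) : Prop :=
  ∀ u : PrimInstr, ∃ v : PrimInstr, v.method ∈ M ∧ sem v = sem u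

/-- The distinguished method set from the paper. -/
def M₀ : Set Method :=
  {(Fb, Fb), (Tb, Tb), (Ib, Ib), (Cb, Cb), (Ib, Fb), (Ib, Tb), (Tb, Ib), (Tb, Cb)}

lemma memFF : (Fb,Fb) ∈ M₀ := by simp [M₀]
lemma memTT : (Tb,Tb) ∈ M₀ := by simp [M₀]
lemma memII : (Ib,Ib) ∈ M₀ := by simp [M₀]
lemma memCC : (Cb,Cb) ∈ M₀ := by simp [M₀]
lemma memIF : (Ib,Fb) ∈ M₀ := by simp [M₀]
lemma memIT : (Ib,Tb) ∈ M₀ := by simp [M₀]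
lemma memTI : (Tb,Ib) ∈ M₀ := by simp [M₀]
lemma memTC : (Tb,Cb) ∈ M₀ := by simp [M₀]

set_option maxHeartbeats 1000000 in
/-- M₀ is complete for effectual equivalence: every primitive instruction is
effectually equivalent to one whose method belongs to M₀. -/
theorem M0_complete : MComplete M₀ := by
  have hf : ∀ f : BFun, f = Fb ∨ f = Tb ∨ f = Ib ∨ f = Cb := by
    intro f
    cases h0 : f false <;> cases h1 : f true
    · exact Or.inl (by funext b; cases b <;> simp [Fb, h0, h1])
    · exact Or.inr (Or.inr (Or.inl (by funext b; cases b <;> simp [Ib, h0, h1])))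
    · exact Or.inr (Or.inr (Or.inr (by funext b; cases b <;> simp [Cb, h0, h1])))
    · exact Or.inr (Or.inl (by funext b; cases b <;> simp [Tb, h0, h1]))
  intro u
  rcases u with ⟨p,q⟩ | ⟨p,q⟩ | ⟨p,q⟩ <;>
    rcases hf p with hp|hp|hp|hp <;> rcases hf q with hq|hq|hq|hq <;> subst hp hq <;>
    first
    | (refine ⟨.plain (Fb,Fb), memFF, ?_⟩; funext b; cases b <;> rfl)
    | (refine ⟨.plain (Tb,Tb), memTT, ?_⟩; funext b; cases b <;> rfl)
    | (refine ⟨.plain (Ib,Ib), memII, ?_⟩; funext b; cases b <;> rfl)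
    | (refine ⟨.plain (Cb,Cb), memCC, ?_⟩; funext b; cases b <;> rfl)
    | (refine ⟨.plain (Ib,Fb), memIF, ?_⟩; funext b; cases b <;> rfl)
    | (refine ⟨.plain (Ib,Tb), memIT, ?_⟩; funext b; cases b <;> rfl)
    | (refine ⟨.plain (Tb,Ib), memTI, ?_⟩; funext b; cases b <;> rfl)
    | (refine ⟨.plain (Tb,Cb), memTC, ?_⟩; funext b; cases b <;> rfl)
    | (refine ⟨.ptest (Fb,Fb), memFF, ?_⟩; funext b; cases b <;> rfl)
    | (refine ⟨.ptest (Tb,Tb), memTT, ?_⟩; funext b; cases b <;> rfl)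
    | (refine ⟨.ptest (Ib,Ib), memII, ?_⟩; funext b; cases b <;> rfl)
    | (refine ⟨.ptest (Cb,Cb), memCC, ?_⟩; funext b; cases b <;> rfl)
    | (refine ⟨.ptest (Ib,Fb), memIF, ?_⟩; funext b; cases b <;> rfl)
    | (refine ⟨.ptest (Ib,Tb), memIT, ?_⟩; funext b; cases b <;> rfl)
    | (refine ⟨.ptest (Tb,Ib), memTI, ?_⟩; funext b; cases b <;> rfl)
    | (refine ⟨.ptest (Tb,Cb), memTC, ?_⟩; funext b; cases b <;> rfl)
    | (refine ⟨.ntest (Fb,Fb), memFF, ?_⟩; funext b; cases b <;> rfl)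
    | (refine ⟨.ntest (Tb,Tb), memTT, ?_⟩; funext b; cases b <;> rfl)
    | (refine ⟨.ntest (Ib,Ib), memII, ?_⟩; funext b; cases b <;> rfl)
    | (refine ⟨.ntest (Cb,Cb), memCC, ?_⟩; funext b; cases b <;> rfl)
    | (refine ⟨.ntest (Ib,Fb), memIF, ?_⟩; funext b; cases b <;> rfl)
    | (refine ⟨.ntest (Ib,Tb), memIT, ?_⟩; funext b; cases b <;> rfl)
    | (refine ⟨.ntest (Tb,Ib), memTI, ?_⟩; funext b; cases b <;> rfl)
    | (refine ⟨.ntest (Tb,Cb), memTC, ?_⟩; funext b; cases b <;> rfl)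
end

section
/- Every minimal set of methods M that is complete for effectual equivalence of primitive Boolean-register instructions has exactly 8 elements. -/
/-- Two Boolean functions in the same constancy class agree or are complements. -/
lemma class_match : ∀ p r : BFun, ((p false = p true) ↔ (r false = r true)) →
    p = r ∨ p = fun b => !(r b) := by decide

lemma realize {M : Set Method} {p q : BFun} (hp : (p, q) ∈ M) (r : BFun)
    (h : p = r ∨ p = fun b => !(r b)) :
    ∃ v : PrimInstr, v.method ∈ M ∧ ∀ b, sem v b = (q b, r b) := by
  rcases h with h | h
  · exact ⟨.ptest (p, q), hp, fun b => by simp [sem, h]⟩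
  · exact ⟨.ntest (p, q), hp, fun b => by simp [sem, h]⟩

lemma complete_iff (M : Set Method) : MComplete M ↔
    ∀ q : BFun, (∃ p, (p false = p true) ∧ (p, q) ∈ M) ∧
      (∃ p, (p false ≠ p true) ∧ (p, q) ∈ M) := by
  constructor
  · intro h q
    constructor
    · obtain ⟨v, hv, hs⟩ := h (.ptest (fun _ => false, q))
      cases v with
      | plain m =>
        have := congrFun hs true; simp [sem] at this
      | ptest m =>
        obtain ⟨p', q'⟩ := m
        have h0 := congrFun hs false; have h1 := congrFun hs true
        simp [sem] at h0 h1
        have hq : q' = q := funext fun b => by cases b <;> simp [h0.1, h1.1]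
        rw [hq] at hv
        exact ⟨p', by simp [h0.2, h1.2], hv⟩
      | ntest m =>
        obtain ⟨p', q'⟩ := m
        have h0 := congrFun hs false; have h1 := congrFun hs true
        simp [sem] at h0 h1
        have hq : q' = q := funext fun b => by cases b <;> simp [h0.1, h1.1]
        rw [hq] at hv
        exact ⟨p', by simp [h0.2, h1.2], hv⟩
    · obtain ⟨v, hv, hs⟩ := h (.ptest (fun b => b, q))
      cases v with
      | plain m =>
        have := congrFun hs false; simp [sem] at this
      | ptest m =>
        obtain ⟨p', q'⟩ := m
        have h0 := congrFun hs false; have h1 := congrFun hs true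
        simp [sem] at h0 h1
        have hq : q' = q := funext fun b => by cases b <;> simp [h0.1, h1.1]
        rw [hq] at hv
        exact ⟨p', by simp [h0.2, h1.2], hv⟩
      | ntest m =>
        obtain ⟨p', q'⟩ := m
        have h0 := congrFun hs false; have h1 := congrFun hs true
        simp [sem] at h0 h1
        have hq : q' = q := funext fun b => by cases b <;> simp [h0.1, h1.1]
        rw [hq] at hv
        exact ⟨p', by simp [h0.2, h1.2], hv⟩
  · intro h u
    cases u with
    | plain m =>
      obtain ⟨p0, q0⟩ := m
      obtain ⟨p, hpc, hpM⟩ := (h q0).1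
      obtain ⟨v, hvM, hv⟩ := realize hpM (fun _ => true)
        (class_match p _ (by simpa using hpc))
      exact ⟨v, hvM, funext fun b => by rw [hv b]; simp [sem]⟩
    | ptest m =>
      obtain ⟨p0, q0⟩ := m
      by_cases hcl : p0 false = p0 true
      · obtain ⟨p, hpc, hpM⟩ := (h q0).1
        obtain ⟨v, hvM, hv⟩ := realize hpM p0
          (class_match p _ (by simp [hpc, hcl]))
        exact ⟨v, hvM, funext fun b => by rw [hv b]; simp [sem]⟩
      · obtain ⟨p, hpc, hpM⟩ := (h q0).2
        obtain ⟨v, hvM, hv⟩ := realize hpM p0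
          (class_match p _ (by simp [hpc, hcl]))
        exact ⟨v, hvM, funext fun b => by rw [hv b]; simp [sem]⟩
    | ntest m =>
      obtain ⟨p0, q0⟩ := m
      by_cases hcl : p0 false = p0 true
      · obtain ⟨p, hpc, hpM⟩ := (h q0).1
        obtain ⟨v, hvM, hv⟩ := realize hpM (fun b => !(p0 b))
          (class_match p _ (by simp [hpc, hcl]))
        exact ⟨v, hvM, funext fun b => by rw [hv b]; simp [sem]⟩
      · obtain ⟨p, hpc, hpM⟩ := (h q0).2
        obtain ⟨v, hvM, hv⟩ := realize hpM (fun b => !(p0 b))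
          (class_match p _ (iff_of_false hpc fun hh => hcl (by simpa using hh)))
        exact ⟨v, hvM, funext fun b => by rw [hv b]; simp [sem]⟩

/-- Every minimal method set complete for effectual equivalence has exactly 8
elements. -/
theorem minimal_complete_card_eight (M : Set Method)
    (hc : MComplete M) (hmin : ∀ M' : Set Method, M' ⊂ M → ¬ MComplete M') :
    M.ncard = 8 := by
  have h1 := fun q => ((complete_iff M).1 hc q).1
  have h2 := fun q => ((complete_iff M).1 hc q).2
  choose pc hpc hpcM using h1
  choose pn hpn hpnM using h2
  set f : BFun → Method := fun q => (pc q, q) with hf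
  set g : BFun → Method := fun q => (pn q, q) with hg
  set M' : Set Method := Set.range f ∪ Set.range g with hM'
  have hsub : M' ⊆ M := by
    rintro x (⟨q, rfl⟩ | ⟨q, rfl⟩)
    · exact hpcM q
    · exact hpnM q
  have hM'c : MComplete M' := by
    rw [complete_iff]
    intro q
    exact ⟨⟨pc q, hpc q, Or.inl ⟨q, rfl⟩⟩, ⟨pn q, hpn q, Or.inr ⟨q, rfl⟩⟩⟩
  have heq : M' = M := by
    by_contra hne
    exact hmin M' (lt_of_le_of_ne hsub hne) hM'c
  rw [← heq, hM']
  have hfinj : Function.Injective f := fun a b h => congrArg Prod.snd h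
  have hginj : Function.Injective g := fun a b h => congrArg Prod.snd h
  have hdisj : Disjoint (Set.range f) (Set.range g) := by
    rw [Set.disjoint_left]
    rintro x ⟨q, rfl⟩ ⟨q', he⟩
    have hq : q' = q := congrArg Prod.snd he
    have hp : pn q' = pc q := congrArg Prod.fst he
    rw [hq] at hp
    exact hpn q (hp ▸ hpc q)
  rw [Set.ncard_union_eq hdisj (Set.toFinite _) (Set.toFinite _)]
  have hcard : ∀ h : BFun → Method, Function.Injective h → (Set.range h).ncard = 4 := by
    intro h hi
    rw [← Set.image_univ, Set.ncard_image_of_injective _ hi, Set.ncard_univ,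
      Nat.card_eq_fintype_card]
    decide
  rw [hcard f hfinj, hcard g hginj]
end

section
/- There exist exactly 256 minimal method sets that are complete for effectual equivalence of primitive Boolean-register instructions. -/
/- ### Auxiliary development -/

/-- Classification of unary Boolean functions. -/
lemma bfun_cases (f : BFun) : f = Fb ∨ f = Tb ∨ f = Ib ∨ f = Cb := by
  rcases h0 : f false <;> rcases h1 : f true
  · left; funext b; cases b <;> simp [Fb, h0, h1]
  · right; right; left; funext b; cases b <;> simp [Ib, h0, h1]
  · right; right; right; funext b; cases b <;> simp [Cb, h0, h1]
  · right; left; funext b; cases b <;> simp [Tb, h0, h1]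

/-- Reformulated completeness. -/
def Good (M : Set Method) : Prop :=
  ∀ q : BFun, ((Fb, q) ∈ M ∨ (Tb, q) ∈ M) ∧ ((Ib, q) ∈ M ∨ (Cb, q) ∈ M)

lemma good_cover_ptest {M : Set Method} (hM : Good M) (p q : BFun) :
    ∃ v : PrimInstr, v.method ∈ M ∧ sem v = sem (.ptest (p, q)) := by
  rcases bfun_cases p with rfl | rfl | rfl | rfl
  · rcases (hM q).1 with h | h
    · exact ⟨.ptest (Fb, q), h, rfl⟩
    · exact ⟨.ntest (Tb, q), h, funext fun b => by simp [sem, Fb, Tb]⟩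
  · rcases (hM q).1 with h | h
    · exact ⟨.ntest (Fb, q), h, funext fun b => by simp [sem, Fb, Tb]⟩
    · exact ⟨.ptest (Tb, q), h, rfl⟩
  · rcases (hM q).2 with h | h
    · exact ⟨.ptest (Ib, q), h, rfl⟩
    · exact ⟨.ntest (Cb, q), h, funext fun b => by simp [sem, Ib, Cb]⟩
  · rcases (hM q).2 with h | h
    · exact ⟨.ntest (Ib, q), h, funext fun b => by simp [sem, Ib, Cb]⟩
    · exact ⟨.ptest (Cb, q), h, rfl⟩

lemma good_complete {M : Set Method} (hM : Good M) : MComplete M := by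
  intro u
  rcases u with ⟨p, q⟩ | ⟨p, q⟩ | ⟨p, q⟩
  · obtain ⟨v, hv, hsem⟩ := good_cover_ptest hM Tb q
    exact ⟨v, hv, hsem.trans (funext fun b => by simp [sem, Tb])⟩
  · exact good_cover_ptest hM p q
  · obtain ⟨v, hv, hsem⟩ := good_cover_ptest hM (fun b => !(p b)) q
    exact ⟨v, hv, hsem.trans (funext fun b => by simp [sem])⟩

lemma complete_good {M : Set Method} (hM : MComplete M) : Good M := by
  intro q
  constructor
  · obtain ⟨v, hv, hsem⟩ := hM (.ptest (Fb, q))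
    rcases v with ⟨p', q'⟩ | ⟨p', q'⟩ | ⟨p', q'⟩
    · have := congrArg Prod.snd (congrFun hsem true)
      simp [sem, Fb] at this
    · have hq : q' = q := funext fun b => congrArg Prod.fst (congrFun hsem b)
      have hp : p' = Fb := funext fun b => congrArg Prod.snd (congrFun hsem b)
      subst hq hp; exact Or.inl hv
    · have hq : q' = q := funext fun b => congrArg Prod.fst (congrFun hsem b)
      have hp : p' = Tb := by
        funext b
        have := congrArg Prod.snd (congrFun hsem b)
        simp [sem, Fb, Tb] at this ⊢
        simpa using this
      subst hq hp; exact Or.inr hv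
  · obtain ⟨v, hv, hsem⟩ := hM (.ptest (Ib, q))
    rcases v with ⟨p', q'⟩ | ⟨p', q'⟩ | ⟨p', q'⟩
    · have := congrArg Prod.snd (congrFun hsem false)
      simp [sem, Ib] at this
    · have hq : q' = q := funext fun b => congrArg Prod.fst (congrFun hsem b)
      have hp : p' = Ib := funext fun b => congrArg Prod.snd (congrFun hsem b)
      subst hq hp; exact Or.inl hv
    · have hq : q' = q := funext fun b => congrArg Prod.fst (congrFun hsem b)
      have hp : p' = Cb := by
        funext b
        have := congrArg Prod.snd (congrFun hsem b)
        simp only [sem, Ib, Cb] at this ⊢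
        cases hb : p' b <;> simp [hb] at this <;> simp [this]
      subst hq hp; exact Or.inr hv

/-- First-coordinate choice. -/
def ch1 : Bool → BFun := fun b => bif b then Tb else Fb
/-- Second-coordinate choice. -/
def ch2 : Bool → BFun := fun b => bif b then Ib else Cb

/-- The minimal complete set determined by a choice function. -/
def chSet (c : BFun → Bool × Bool) : Set Method :=
  {m | m.1 = ch1 (c m.2).1 ∨ m.1 = ch2 (c m.2).2}

lemma good_chSet (c : BFun → Bool × Bool) : Good (chSet c) := by
  intro q
  constructor
  · cases h : (c q).1
    · exact Or.inl (Or.inl (by simp [ch1, h]))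
    · exact Or.inr (Or.inl (by simp [ch1, h]))
  · cases h : (c q).2
    · exact Or.inr (Or.inr (by simp [ch2, h]))
    · exact Or.inl (Or.inr (by simp [ch2, h]))

lemma ch1_ne_ch2 (a b : Bool) : ch1 a ≠ ch2 b := by
  cases a <;> cases b <;> simp [ch1, ch2] <;> decide

lemma ch1_inj : Function.Injective ch1 := by
  intro a b h
  cases a <;> cases b <;> simp_all [ch1] <;> exact absurd h (by decide)

lemma ch2_inj : Function.Injective ch2 := by
  intro a b h
  cases a <;> cases b <;> simp_all [ch2] <;> exact absurd h (by decide)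

lemma fb_ne_ch2 (b : Bool) : Fb ≠ ch2 b := by cases b <;> decide
lemma tb_ne_ch2 (b : Bool) : Tb ≠ ch2 b := by cases b <;> decide
lemma ib_ne_ch1 (b : Bool) : Ib ≠ ch1 b := by cases b <;> decide
lemma cb_ne_ch1 (b : Bool) : Cb ≠ ch1 b := by cases b <;> decide

lemma chSet_subset {c : BFun → Bool × Bool} {M : Set Method}
    (hG : Good M) (hsub : M ⊆ chSet c) : chSet c ⊆ M := by
  intro m hm
  obtain ⟨p, q⟩ := m
  have h1 : (ch1 (c q).1, q) ∈ M := by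
    rcases (hG q).1 with h | h
    · rcases hsub h with hc | hc
      · simp only at hc; rwa [← hc]
      · exact (fb_ne_ch2 _ hc).elim
    · rcases hsub h with hc | hc
      · simp only at hc; rwa [← hc]
      · exact (tb_ne_ch2 _ hc).elim
  have h2 : (ch2 (c q).2, q) ∈ M := by
    rcases (hG q).2 with h | h
    · rcases hsub h with hc | hc
      · exact (ib_ne_ch1 _ hc).elim
      · simp only at hc; rwa [← hc]
    · rcases hsub h with hc | hc
      · exact (cb_ne_ch1 _ hc).elim
      · simp only at hc; rwa [← hc]
  rcases hm with hc | hc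
  · simp only at hc; rw [hc]; exact h1
  · simp only at hc; rw [hc]; exact h2

lemma chSet_inj : Function.Injective chSet := by
  intro c c' h
  funext q
  have m1 : (ch1 (c q).1, q) ∈ chSet c := Or.inl rfl
  have m2 : (ch2 (c q).2, q) ∈ chSet c := Or.inr rfl
  rw [h] at m1 m2
  have e1 : (c q).1 = (c' q).1 := by
    rcases m1 with hc | hc
    · exact ch1_inj hc
    · exact (ch1_ne_ch2 _ _ hc).elim
  have e2 : (c q).2 = (c' q).2 := by
    rcases m2 with hc | hc
    · exact (ch1_ne_ch2 _ _ hc.symm).elim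
    · exact ch2_inj hc
  exact Prod.ext e1 e2

lemma minimalComplete_iff_mem_range (M : Set Method) :
    (MComplete M ∧ ∀ M' : Set Method, M' ⊂ M → ¬ MComplete M') ↔ M ∈ Set.range chSet := by
  classical
  constructor
  · rintro ⟨hC, hmin⟩
    have hG := complete_good hC
    set c : BFun → Bool × Bool := fun q => (decide ((Tb, q) ∈ M), decide ((Ib, q) ∈ M)) with hc
    have hsub : chSet c ⊆ M := by
      intro m hm
      obtain ⟨p, q⟩ := m
      have h1 : ch1 (c q).1 = Tb ∧ (Tb, q) ∈ M ∨ ch1 (c q).1 = Fb ∧ (Fb, q) ∈ M := by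
        by_cases ht : (Tb, q) ∈ M
        · exact Or.inl ⟨by simp [hc, ht, ch1], ht⟩
        · refine Or.inr ⟨by simp [hc, ht, ch1], ?_⟩
          rcases (hG q).1 with h | h
          · exact h
          · exact absurd h ht
      have h2 : ch2 (c q).2 = Ib ∧ (Ib, q) ∈ M ∨ ch2 (c q).2 = Cb ∧ (Cb, q) ∈ M := by
        by_cases ht : (Ib, q) ∈ M
        · exact Or.inl ⟨by simp [hc, ht, ch2], ht⟩
        · refine Or.inr ⟨by simp [hc, ht, ch2], ?_⟩
          rcases (hG q).2 with h | h
          · exact absurd h ht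
          · exact h
      rcases hm with heq | heq
      · simp only at heq
        rcases h1 with ⟨he, hmem⟩ | ⟨he, hmem⟩ <;> rw [heq, he] <;> exact hmem
      · simp only at heq
        rcases h2 with ⟨he, hmem⟩ | ⟨he, hmem⟩ <;> rw [heq, he] <;> exact hmem
    refine ⟨c, ?_⟩
    by_contra hne
    exact hmin (chSet c) (ssubset_of_subset_of_ne hsub hne) (good_complete (good_chSet c))
  · rintro ⟨c, rfl⟩
    refine ⟨good_complete (good_chSet c), ?_⟩
    intro M' hss hC'
    have := chSet_subset (complete_good hC') hss.subset
    exact hss.not_subset this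

/-- There are exactly 256 minimal method sets complete for effectual
equivalence. -/
theorem card_minimal_complete_sets :
    {M : Set Method |
        MComplete M ∧ ∀ M' : Set Method, M' ⊂ M → ¬ MComplete M'}.ncard = 256 := by
  have hset : {M : Set Method |
      MComplete M ∧ ∀ M' : Set Method, M' ⊂ M → ¬ MComplete M'} = Set.range chSet := by
    ext M; exact minimalComplete_iff_mem_range M
  rw [hset, ← Set.image_univ, Set.ncard_image_of_injective _ chSet_inj, Set.ncard_univ,
    Nat.card_eq_fintype_card]
  simp [Fintype.card_fun]
end

section
/- The instruction set with methods {(F,F), (T,T), (I,I), (C,C), (I,F), (I,T), (T,I), (T,C)} is 1-size-bounded functionally complete: every primitive Boolean-register instruction on any method is behaviourally realized by a single instruction (an instruction sequence of length 1) using only methods from this set. -/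
/-- Instructions occurring in instruction sequences: basic/test instructions,
forward jumps, and the termination instruction. -/
inductive Instr
  | basic (u : PrimInstr)
  | jump (l : ℕ)
  | halt

/-- Fuel-bounded execution of an instruction sequence on a single Boolean
register, from position `pos` with register content `b`.  `some b'` means
termination with final content `b'`; `none` means divergence/inaction
(jump `#0`, running past the end, or fuel exhaustion). -/
def run : ℕ → List Instr → ℕ → Bool → Option Bool
  | 0, _, _, _ => none
  | fuel + 1, X, pos, b =>
    match X[pos]? with
    | none => none
    | some .halt => some b
    | some (.jump l) => if l = 0 then none else run fuel X (pos + l) b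
    | some (.basic u) =>
        let r := sem u b
        run fuel X (pos + if r.2 then 1 else 2) r.1

/-- The behaviour of an instruction sequence on initial content `b`.
Since all jumps move strictly forward, `X.length + 1` steps suffice. -/
def behav (X : List Instr) (b : Bool) : Option Bool := run (X.length + 1) X 0 b

/-- `X` is an instruction sequence over the method set `M`. -/
def overM (M : Set Method) (X : List Instr) : Prop :=
  ∀ u ∈ X, ∀ v : PrimInstr, u = Instr.basic v → v.method ∈ M

/-- `X` realizes the primitive instruction `u`: for every initial register
content and every number `n` of appended termination instructions, the two
instruction sequences have identical behaviour (termination vs. divergence,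
exit position) and identical final register content. -/
def Realizes (X : List Instr) (u : PrimInstr) : Prop :=
  ∀ (b : Bool) (n : ℕ),
    behav (Instr.basic u :: List.replicate n Instr.halt) b =
    behav (X ++ List.replicate n Instr.halt) b

/-- The instruction set with methods from `M` is `k`-size-bounded functionally
complete. -/
def kComplete (M : Set Method) (k : ℕ) : Prop :=
  ∀ u : PrimInstr, ∃ X : List Instr, overM M X ∧ X.length ≤ k ∧ Realizes X u

/- Since the sequence after the first instruction consists of halts only, an instruction is
realized by any single instruction with the same map `b ↦ (new content, continue?)`.  Among the
24 instructions over the eight methods all 16 such maps occur: plain (f, f) gives update `f`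
with constant flag true, and a positive or negative test with reply F, T, I or C produces each
of the other three flag patterns, with enough update functions attached to cover all four. -/

lemma run_congr (fuel : ℕ) (X Y : List Instr) (pos : ℕ) (b : Bool)
    (h : ∀ i, pos ≤ i → X[i]? = Y[i]?) : run fuel X pos b = run fuel Y pos b := by
  induction fuel generalizing pos b with
  | zero => rfl
  | succ fuel ih =>
    have h' : ∀ k, ∀ i, pos + k ≤ i → X[i]? = Y[i]? := fun k i hi => h i (by omega)
    rw [run, run, ← h pos le_rfl]
    rcases X[pos]? with _ | (u | l | _)
    · rfl
    · exact ih _ _ (h' _)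
    · by_cases hl : l = 0
      · simp only [hl, if_true]
      · simp only [hl, if_false]
        exact ih _ _ (h' l)
    · rfl

lemma realizes_singleton_of_sem_eq {u v : PrimInstr} (h : sem v = sem u) :
    Realizes [Instr.basic v] u := by
  intro b n
  rw [List.singleton_append, behav, behav, List.length_cons, run, run]
  simp only [List.getElem?_cons_zero, h]
  exact run_congr _ _ _ _ _ fun i hi => by
    cases i with
    | zero => split at hi <;> omega
    | succ i => rfl

lemma overM_singleton_basic {M : Set Method} {v : PrimInstr} :
    overM M [Instr.basic v] ↔ v.method ∈ M := by
  simp [overM]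

def instrsOver (ms : List Method) : List PrimInstr :=
  ms.flatMap fun m => [.plain m, .ptest m, .ntest m]

lemma method_mem_of_mem_instrsOver {ms : List Method} {v : PrimInstr}
    (hv : v ∈ instrsOver ms) : v.method ∈ ms := by
  simp only [instrsOver, List.mem_flatMap, List.mem_cons, List.not_mem_nil,
    or_false] at hv
  obtain ⟨m, hm, rfl | rfl | rfl⟩ := hv <;> exact hm

def baseMethods : List Method :=
  [(Fb, Fb), (Tb, Tb), (Ib, Ib), (Cb, Cb), (Ib, Fb), (Ib, Tb), (Tb, Ib), (Tb, Cb)]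

lemma exists_mem_instrsOver_baseMethods_sem_eq :
    ∀ a b c d : Bool, ∃ v ∈ instrsOver baseMethods,
      sem v false = (a, b) ∧ sem v true = (c, d) := by
  decide

lemma exists_base_method_sem_eq (u : PrimInstr) :
    ∃ v : PrimInstr, v.method ∈ ({(Fb, Fb), (Tb, Tb), (Ib, Ib), (Cb, Cb),
      (Ib, Fb), (Ib, Tb), (Tb, Ib), (Tb, Cb)} : Set Method) ∧ sem v = sem u := by
  obtain ⟨v, hv, hfalse, htrue⟩ := exists_mem_instrsOver_baseMethods_sem_eq
    (sem u false).1 (sem u false).2 (sem u true).1 (sem u true).2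
  refine ⟨v, by simpa [baseMethods] using method_mem_of_mem_instrsOver hv, ?_⟩
  funext b
  cases b
  · exact hfalse
  · exact htrue

/-- The instruction set with methods
{(F,F),(T,T),(I,I),(C,C),(I,F),(I,T),(T,I),(T,C)} is 1-size-bounded
functionally complete. -/
theorem one_size_bounded_complete :
    kComplete ({(Fb, Fb), (Tb, Tb), (Ib, Ib), (Cb, Cb),
                (Ib, Fb), (Ib, Tb), (Tb, Ib), (Tb, Cb)} : Set Method) 1 := by
  intro u
  obtain ⟨v, hv, hsem⟩ := exists_base_method_sem_eq u
  exact ⟨[Instr.basic v], overM_singleton_basic.2 hv, le_rfl, realizes_singleton_of_sem_eq hsem⟩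
end

section
/- The instruction set with methods {(F,F), (T,T), (I,I), (C,C), (I,F), (I,T)} is strictly 2-size-bounded functionally complete: every primitive Boolean-register instruction is realized by an instruction sequence of length at most 2 over these methods, but some primitive instruction (e.g. ntest(T,C)) is not realized by any single instruction over these methods. -/
/-!
The semantics of a primitive instruction is a pair of unary Boolean functions: the update `q`
and the reply `r` (continue or skip). Over the six methods, a reply `r ∈ {T, I, C}` is realized
by one instruction: `plain (q, q)`, `ptest (I, q)` or `ntest (I, q)`, where the missing method
`(I, C)` is replaced by `ntest (C, C)` resp. `ptest (C, C)`; the reply `F` (always skip) is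
realized by `plain (q, q); #2`. For `ntest (T, C)`, whose update is `C` and reply is `F`, no
sequence of length `≤ 1` works: a single instruction would need the same semantics, but the only
method with update `C` is `(C, C)`, which never skips unconditionally; and a sequence without
instructions of the form `basic _` cannot complement the register.
-/

/-- The behaviour of one instruction with semantics `r` followed by `n` halts: it exits to
position `1` or `2`, and terminates only if a halt stands there. -/
def stepOutcome (r : Bool × Bool) (n : ℕ) : Option Bool :=
  if (if r.2 then 1 else 2) ≤ n then some r.1 else none

lemma stepOutcome_injective : Function.Injective stepOutcome := by
  rintro ⟨c, x⟩ ⟨d, y⟩ h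
  have h1 := congrFun h 1
  have h2 := congrFun h 2
  cases x <;> cases y <;> simp_all [stepOutcome]

lemma stepOutcome_two (r : Bool × Bool) : stepOutcome r 2 = some r.1 := by
  rcases r with ⟨c, _ | _⟩ <;> rfl

lemma behav_basic_cons_replicate_halt (u : PrimInstr) (b : Bool) (n : ℕ) :
    behav (.basic u :: List.replicate n .halt) b = stepOutcome (sem u b) n := by
  rcases n with _ | _ | m <;> cases hc : (sem u b).2 <;>
    simp [behav, stepOutcome, run, hc, List.replicate_succ]

lemma behav_plain_jump_two (m : Method) (b : Bool) (n : ℕ) :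
    behav ([.basic (.plain m), .jump 2] ++ List.replicate n .halt) b =
      stepOutcome (m.2 b, false) n := by
  rcases n with _ | _ | k <;> simp [behav, stepOutcome, run, sem, List.replicate_succ]

lemma run_eq_some_of_forall_ne_basic {X : List Instr} (hX : ∀ i ∈ X, ∀ v, i ≠ .basic v) :
    ∀ (fuel pos : ℕ) (b b' : Bool), run fuel X pos b = some b' → b' = b := by
  intro fuel
  induction fuel with
  | zero => simp [run]
  | succ fuel ih =>
    intro pos b b' h
    rcases hi : X[pos]? with _ | i
    · simp [run, hi] at h
    · have hne := hX i (List.mem_of_getElem? hi)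
      cases i with
      | basic v => exact absurd rfl (hne v)
      | jump l =>
        simp only [run, hi] at h
        split_ifs at h
        exact ih _ _ _ h
      | halt => simpa [run, hi] using h.symm

lemma realizes_iff {X : List Instr} {u : PrimInstr} :
    Realizes X u ↔ ∀ b n, behav (X ++ List.replicate n .halt) b = stepOutcome (sem u b) n := by
  simp only [Realizes, behav_basic_cons_replicate_halt, eq_comm]

lemma realizes_singleton_iff {u v : PrimInstr} : Realizes [.basic v] u ↔ sem v = sem u := by
  simp only [realizes_iff, List.singleton_append, behav_basic_cons_replicate_halt]
  exact ⟨fun h => funext fun b => stepOutcome_injective (funext (h b)),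
    fun h b n => by rw [h]⟩

lemma realizes_plain_jump_two {m : Method} {u : PrimInstr}
    (hu : ∀ b, sem u b = (m.2 b, false)) : Realizes [.basic (.plain m), .jump 2] u := by
  simp only [realizes_iff, behav_plain_jump_two, hu, implies_true]

/-- Without basic instructions the register is never changed. -/
lemma not_realizes_of_forall_ne_basic {X : List Instr} {u : PrimInstr} {b : Bool}
    (hX : ∀ i ∈ X, ∀ v, i ≠ .basic v) (hu : (sem u b).1 ≠ b) : ¬ Realizes X u := by
  intro h
  have hX' : ∀ i ∈ X ++ List.replicate 2 .halt, ∀ v, i ≠ .basic v := by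
    simp only [List.mem_append, List.mem_replicate]
    rintro i (hi | ⟨-, rfl⟩) v
    exacts [hX i hi v, Instr.noConfusion]
  have h2 := realizes_iff.1 h b 2
  exact hu (run_eq_some_of_forall_ne_basic hX' _ _ _ _ (h2.trans (stepOutcome_two _)))

def sixMethods : Set Method := {(Fb, Fb), (Tb, Tb), (Ib, Ib), (Cb, Cb), (Ib, Fb), (Ib, Tb)}

lemma self_mem_sixMethods (q : BFun) : (q, q) ∈ sixMethods := by
  rcases bfun_cases q with rfl | rfl | rfl | rfl <;> simp [sixMethods]

lemma Ib_mem_sixMethods {q : BFun} (hq : q ≠ Cb) : (Ib, q) ∈ sixMethods := by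
  rcases bfun_cases q with rfl | rfl | rfl | rfl <;> simp_all [sixMethods]

lemma overM_singleton {M : Set Method} {v : PrimInstr} (hv : v.method ∈ M) :
    overM M [.basic v] := by
  simp only [overM, List.mem_singleton]
  rintro _ rfl _ ⟨⟩
  exact hv

lemma overM_plain_jump {M : Set Method} {m : Method} (l : ℕ) (hm : m ∈ M) :
    overM M [.basic (.plain m), .jump l] := by
  simp only [overM, List.mem_cons, List.not_mem_nil, or_false]
  rintro _ (rfl | rfl) _ ⟨⟩
  exact hm

theorem sixMethods_kComplete_two : kComplete sixMethods 2 := by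
  intro u
  obtain ⟨q, r, hu⟩ : ∃ q r : BFun, sem u = fun b => (q b, r b) := ⟨_, _, rfl⟩
  have single : ∀ v : PrimInstr, v.method ∈ sixMethods → sem v = (fun b => (q b, r b)) →
      ∃ X, overM sixMethods X ∧ X.length ≤ 2 ∧ Realizes X u := fun v hv h =>
    ⟨_, overM_singleton hv, by simp, realizes_singleton_iff.2 (h.trans hu.symm)⟩
  rcases bfun_cases r with rfl | rfl | rfl | rfl
  · exact ⟨_, overM_plain_jump 2 (self_mem_sixMethods q), le_rfl,
      realizes_plain_jump_two (congrFun hu)⟩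
  · exact single (.plain (q, q)) (self_mem_sixMethods q) rfl
  · by_cases hq : q = Cb
    · subst hq
      exact single (.ntest (Cb, Cb)) (self_mem_sixMethods Cb) (funext fun b => by cases b <;> rfl)
    · exact single (.ptest (Ib, q)) (Ib_mem_sixMethods hq) rfl
  · by_cases hq : q = Cb
    · subst hq
      exact single (.ptest (Cb, Cb)) (self_mem_sixMethods Cb) rfl
    · exact single (.ntest (Ib, q)) (Ib_mem_sixMethods hq) rfl

lemma sem_ne_ntest_Tb_Cb {v : PrimInstr} (hv : v.method ∈ sixMethods) :
    sem v ≠ sem (.ntest (Tb, Cb)) := by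
  intro h
  have h0 := congrFun h false
  have h1 := congrFun h true
  cases v <;> simp only [PrimInstr.method, sixMethods, Set.mem_insert_iff,
    Set.mem_singleton_iff] at hv <;>
    rcases hv with rfl | rfl | rfl | rfl | rfl | rfl <;> simp_all [sem, Fb, Tb, Ib, Cb]

theorem not_realizes_ntest_Tb_Cb_of_length_le_one {X : List Instr} (hM : overM sixMethods X)
    (hlen : X.length ≤ 1) : ¬ Realizes X (.ntest (Tb, Cb)) := by
  match X, hlen with
  | [.basic v], _ =>
    exact fun h => sem_ne_ntest_Tb_Cb (hM _ (by simp) v rfl) (realizes_singleton_iff.1 h)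
  | [], _ => exact not_realizes_of_forall_ne_basic (b := true) (by simp) (by decide)
  | [.jump l], _ => exact not_realizes_of_forall_ne_basic (b := true) (by simp) (by decide)
  | [.halt], _ => exact not_realizes_of_forall_ne_basic (b := true) (by simp) (by decide)

/-- The instruction set with methods {(F,F),(T,T),(I,I),(C,C),(I,F),(I,T)} is
strictly 2-size-bounded functionally complete. -/
theorem strictly_two_size_bounded_complete :
    kComplete ({(Fb, Fb), (Tb, Tb), (Ib, Ib), (Cb, Cb),
                (Ib, Fb), (Ib, Tb)} : Set Method) 2 ∧
    ¬ kComplete ({(Fb, Fb), (Tb, Tb), (Ib, Ib), (Cb, Cb),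
                  (Ib, Fb), (Ib, Tb)} : Set Method) 1 :=
  ⟨sixMethods_kComplete_two, fun h =>
    let ⟨_, hM, hlen, hR⟩ := h (.ntest (Tb, Cb))
    not_realizes_ntest_Tb_Cb_of_length_le_one hM hlen hR⟩
end
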